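/- arXiv:1204.6133 — 5 statements merged into one kernel-verified Lean document; each statement's English description precedes it below -/
import Mathlib

section
/- Let P be a probability measure on ℝ whose support is contained in a compact interval, let f : ℝ → ℝ be a polynomial function, and let y, a ∈ ℝ. Then ∫ exp(y · f(u + a)) dP(u) = ∑_{n=0}^∞ (m_n / n!) · g^{(n)}(a), where m_n = ∫ u^n dP(u) is the n-th moment of P, g(t) = exp(y · f(t)), and g^{(n)} denotes the n-th iterated derivative of g; in particular the series on the right converges. -/
/-!
The function `g t = exp (y * f t)` is the restriction to `ℝ` of the entire function
`z ↦ exp (y * f z)`, so its Taylor series at `a` converges to `g (u + a)` for every real `u`.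
Since `P` is supported in `[-M, M]`, the terms `g⁽ⁿ⁾(a) / n! * uⁿ` are dominated by the
constants `|g⁽ⁿ⁾(a) / n! * Mⁿ|`, which are summable because unconditional convergence of a real
series is absolute; dominated convergence then integrates the series term by term.
-/

open MeasureTheory
open scoped Nat

theorem iteratedDeriv_re_comp_ofReal {G : ℂ → ℂ} (hG : Differentiable ℂ G) (n : ℕ) :
    iteratedDeriv n (fun x : ℝ => (G x).re) = fun x : ℝ => (iteratedDeriv n G x).re := by
  induction n with
  | zero => simp
  | succ n ih =>
    have hGn : Differentiable ℂ (iteratedDeriv n G) :=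
      hG.contDiff.differentiable_iteratedDeriv n (WithTop.coe_lt_top _)
    ext x
    rw [iteratedDeriv_succ, ih, iteratedDeriv_succ]
    exact (hGn x).hasDerivAt.real_of_complex.deriv

theorem hasSum_taylorSeries_of_re_entire {G : ℂ → ℂ} (hG : Differentiable ℂ G) {g : ℝ → ℝ}
    (hg : ∀ x : ℝ, g x = (G x).re) (a u : ℝ) :
    HasSum (fun n => iteratedDeriv n g a / n ! * u ^ n) (g (u + a)) := by
  have h := Complex.reCLM.hasSum (Complex.hasSum_taylorSeries_of_entire hG a (u + a))
  simp only [funext hg, iteratedDeriv_re_comp_ofReal hG]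
  convert h using 2 with n
  · have : (n ! : ℂ)⁻¹ * (u : ℂ) ^ n = ((u ^ n / n ! : ℝ) : ℂ) := by push_cast; ring
    rw [Complex.reCLM_apply, add_sub_cancel_right, smul_eq_mul, smul_eq_mul, ← mul_assoc, this,
      Complex.re_ofReal_mul]
    ring
  · norm_cast

theorem hasSum_integral_of_hasSum_mul_pow {μ : Measure ℝ} [IsFiniteMeasure μ] {c : ℕ → ℝ}
    {F : ℝ → ℝ} (hF : ∀ u, HasSum (fun n => c n * u ^ n) (F u)) {M : ℝ}
    (hM : ∀ᵐ u ∂μ, |u| ≤ M) :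
    HasSum (fun n => c n * ∫ u, u ^ n ∂μ) (∫ u, F u ∂μ) := by
  simp only [← integral_const_mul]
  refine hasSum_integral_of_dominated_convergence (fun n _ => |c n * M ^ n|)
    (fun n => by fun_prop) (fun n => ?_) (.of_forall fun _ => (hF M).summable.abs)
    (integrable_const _) (.of_forall hF)
  filter_upwards [hM] with u hu
  rw [Real.norm_eq_abs, abs_mul, abs_mul, abs_pow, abs_pow]
  exact mul_le_mul_of_nonneg_left (pow_le_pow_left₀ (abs_nonneg u) (hu.trans (le_abs_self M)) n)
    (abs_nonneg _)

theorem ae_abs_le_of_measure_compl_Icc_eq_zero {μ : Measure ℝ} {c d : ℝ}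
    (h : μ (Set.Icc c d)ᶜ = 0) : ∀ᵐ u ∂μ, |u| ≤ max |c| |d| := by
  filter_upwards [ae_iff.mpr h] with u hu
  exact abs_le_max_abs_abs hu.1 hu.2

/-- For a compactly supported probability measure `P`, a polynomial `f` and `y, a ∈ ℝ`,
`∫ exp (y * f (u + a)) dP(u) = ∑ (m n / n!) * g⁽ⁿ⁾(a)` where `g t = exp (y * f t)`
and `m n` is the `n`-th moment of `P`; in particular the series converges. -/
theorem pushforward_exp_series (P : Measure ℝ) [IsProbabilityMeasure P]
    (c d : ℝ) (hsupp : P (Set.Icc c d)ᶜ = 0)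
    (f : Polynomial ℝ) (y a : ℝ) :
    HasSum
      (fun n : ℕ => (∫ u, u ^ n ∂P) / n.factorial *
        iteratedDeriv n (fun t => Real.exp (y * f.eval t)) a)
      (∫ u, Real.exp (y * f.eval (u + a)) ∂P) := by
  have hG : Differentiable ℂ fun z : ℂ => Complex.exp (y * Polynomial.aeval z f) :=
    Complex.differentiable_exp.comp ((differentiable_const _).mul f.differentiable_aeval)
  have hg (x : ℝ) :
      Real.exp (y * f.eval x) = (Complex.exp (y * Polynomial.aeval (x : ℂ) f)).re := by
    have hf : Polynomial.aeval (x : ℂ) f = ((f.eval x : ℝ) : ℂ) :=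
      Polynomial.aeval_algebraMap_apply_eq_algebraMap_eval x f
    rw [hf, ← Complex.ofReal_mul, ← Complex.ofReal_exp, Complex.ofReal_re]
  have h := hasSum_integral_of_hasSum_mul_pow (hasSum_taylorSeries_of_re_entire hG hg a)
    (ae_abs_le_of_measure_compl_Icc_eq_zero hsupp)
  convert h using 2 with n
  ring
end

section
/- Let f : ℝ → ℝ be a polynomial function with f(0) = 0 and let λ = f'(0). Then for every n ∈ ℕ there exists a polynomial P_n ∈ ℝ[X] of degree at most n whose coefficient of X^n equals λ^n, such that for every y ∈ ℝ, the n-th iterated derivative of the function a ↦ exp(y · f(a)), evaluated at a = 0, equals P_n(y). In other words, H_n(y) := (d^n/da^n) exp(y·f(a))|_{a=0} is a polynomial in y with leading term (λ y)^n. -/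
/-!
Differentiating `exp (y f(a)) · P(y, a)` in `a` gives `exp (y f(a)) · (∂ₐP + y f'(a) P)`, so
`H_n(y) = P_n(y, 0)` for the polynomials `P_0 = 1`, `P_{n+1} = ∂ₐP_n + y f' P_n`. Each step raises
the degree in `y` by at most one, and at `a = 0` the only contribution to `yⁿ⁺¹` comes from
`y f'(0)` times the `yⁿ`-coefficient of `P_n(y, 0)`, giving the leading coefficient `f'(0)ⁿ`.
-/

open Polynomial

/-- `P_n(y, a)` for `f' = g`, as a polynomial in `a` whose coefficients are polynomials in `y`. -/
noncomputable def expDerivPoly {R : Type*} [CommRing R] (g : R[X]) : ℕ → R[X][X]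
  | 0 => 1
  | n + 1 => derivative (expDerivPoly g n) + C X * g.map C * expDerivPoly g n

section Algebra

variable {R : Type*} [CommRing R] (g : R[X])

theorem natDegree_coeff_expDerivPoly_le (n i : ℕ) :
    ((expDerivPoly g n).coeff i).natDegree ≤ n := by
  induction n generalizing i with
  | zero => rcases eq_or_ne i 0 with rfl | hi <;> simp [expDerivPoly, coeff_one, *]
  | succ n ih =>
    have hderiv : ((derivative (expDerivPoly g n)).coeff i).natDegree ≤ n := by
      rw [coeff_derivative, ← Nat.cast_succ]
      exact natDegree_mul_le.trans (by rw [natDegree_natCast, add_zero]; exact ih (i + 1))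
    have hmul : ((g.map C * expDerivPoly g n).coeff i).natDegree ≤ n := by
      rw [coeff_mul]
      refine natDegree_sum_le_of_forall_le _ _ fun x _ => ?_
      rw [coeff_map]
      exact (natDegree_C_mul_le _ _).trans (ih _)
    rw [expDerivPoly, coeff_add, mul_assoc, coeff_C_mul]
    refine (natDegree_add_le _ _).trans (max_le (hderiv.trans n.le_succ) ?_)
    exact natDegree_mul_le.trans (by linarith [natDegree_X_le (R := R)])

theorem coeff_coeff_zero_expDerivPoly (n : ℕ) :
    ((expDerivPoly g n).coeff 0).coeff n = g.eval 0 ^ n := by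
  induction n with
  | zero => simp [expDerivPoly]
  | succ n ih =>
    have hderiv : ((derivative (expDerivPoly g n)).coeff 0).coeff (n + 1) = 0 := by
      rw [coeff_derivative]
      exact coeff_eq_zero_of_natDegree_lt <| natDegree_mul_le.trans_lt <| by
        simpa using (natDegree_coeff_expDerivPoly_le g n 1).trans_lt n.lt_succ_self
    rw [expDerivPoly, coeff_add, coeff_add, hderiv, mul_assoc, coeff_C_mul, mul_coeff_zero,
      coeff_map, coeff_X_mul, coeff_C_mul, ih, coeff_zero_eq_eval_zero, pow_succ']
    ring

theorem map_evalRingHom_expDerivPoly_succ (y : R) (n : ℕ) :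
    (expDerivPoly g (n + 1)).map (evalRingHom y) =
      derivative ((expDerivPoly g n).map (evalRingHom y)) +
        C y * g * (expDerivPoly g n).map (evalRingHom y) := by
  have hC : (evalRingHom y).comp C = RingHom.id R := eval₂RingHom_comp_C _ _
  simp [expDerivPoly, Polynomial.map_add, Polynomial.map_mul, derivative_map, map_map, hC]

end Algebra

theorem iteratedDeriv_exp_mul_eval (f : ℝ[X]) (y : ℝ) (n : ℕ) :
    iteratedDeriv n (fun a => Real.exp (y * f.eval a)) =
      fun a => Real.exp (y * f.eval a) *
        ((expDerivPoly (derivative f) n).map (evalRingHom y)).eval a := by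
  induction n with
  | zero => simp [expDerivPoly]
  | succ n ih =>
    ext a
    set p := (expDerivPoly (derivative f) n).map (evalRingHom y)
    have hexp : HasDerivAt (fun a => Real.exp (y * f.eval a))
        (Real.exp (y * f.eval a) * (y * (derivative f).eval a)) a :=
      ((f.hasDerivAt a).const_mul y).exp
    have hprod : HasDerivAt (fun a => Real.exp (y * f.eval a) * p.eval a) _ a :=
      hexp.mul (p.hasDerivAt a)
    rw [iteratedDeriv_succ, ih, hprod.deriv, map_evalRingHom_expDerivPoly_succ]
    simp only [eval_add, eval_mul, eval_C]
    ring

/-- For a polynomial `f` with `f 0 = 0` and `l = f' 0`, the quantity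
`H_n(y) = ∂ⁿ/∂aⁿ exp (y f(a)) |_{a=0}` is a polynomial in `y` of degree at most `n`
with leading coefficient `l ^ n`. -/
theorem Hn_is_polynomial_with_leading_term (f : Polynomial ℝ)
    (hf0 : f.eval 0 = 0) (l : ℝ) (hl : l = (Polynomial.derivative f).eval 0) :
    ∀ n : ℕ, ∃ Q : Polynomial ℝ, Q.natDegree ≤ n ∧ Q.coeff n = l ^ n ∧
      ∀ y : ℝ, iteratedDeriv n (fun a => Real.exp (y * f.eval a)) 0 = Q.eval y := by
  intro n
  refine ⟨(expDerivPoly (derivative f) n).coeff 0, natDegree_coeff_expDerivPoly_le _ n 0,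
    hl ▸ coeff_coeff_zero_expDerivPoly _ n, fun y => ?_⟩
  rw [congrFun (iteratedDeriv_exp_mul_eval f y n) 0, hf0, mul_zero, Real.exp_zero, one_mul,
    ← coeff_zero_eq_eval_zero, coeff_map, coe_evalRingHom]
end

section
/- Let P be a probability measure on ℝ and let s ∈ ℝ. If there exists a constant M such that for every positive natural number n the function x ↦ exp(n·s·x) is P-integrable with ∫ exp(n·s·x) dP(x) ≤ M, then ∫ exp(s·x) dP(x) ≤ 1. -/
open MeasureTheory

/-- If the Laplace transform values `φ(n·s)` stay bounded for all positive `n`,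
then `φ(s) ≤ 1`. -/
theorem laplace_le_one_of_bounded (P : Measure ℝ) [IsProbabilityMeasure P] (s : ℝ)
    (M : ℝ)
    (h : ∀ n : ℕ, 0 < n → Integrable (fun x => Real.exp ((n : ℝ) * s * x)) P ∧
      ∫ x, Real.exp ((n : ℝ) * s * x) ∂P ≤ M) :
    ∫ x, Real.exp (s * x) ∂P ≤ 1 := by
  by_contra hc
  push_neg at hc
  set c : ℝ := ∫ x, Real.exp (s * x) ∂P with hcdef
  have hint1 : Integrable (fun x => Real.exp (s * x)) P := by
    have := (h 1 one_pos).1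
    simpa using this
  -- c^n ≤ ∫ exp(n s x) ≤ M for all n > 0
  have key : ∀ n : ℕ, 0 < n → c ^ n ≤ M := by
    intro n hn
    obtain ⟨hIn, hMn⟩ := h n hn
    have hconv : ConvexOn ℝ (Set.Ici (0:ℝ)) (fun t : ℝ => t ^ n) := convexOn_pow n
    have hcont : ContinuousOn (fun t : ℝ => t ^ n) (Set.Ici (0:ℝ)) :=
      (continuous_pow n).continuousOn
    have hmem : ∀ᵐ x ∂P, Real.exp (s * x) ∈ Set.Ici (0:ℝ) :=
      Filter.Eventually.of_forall fun x => (Real.exp_pos _).le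
    have hcomp : Integrable ((fun t : ℝ => t ^ n) ∘ fun x => Real.exp (s * x)) P := by
      have : ((fun t : ℝ => t ^ n) ∘ fun x => Real.exp (s * x)) =
          fun x => Real.exp ((n : ℝ) * s * x) := by
        funext x
        simp [Function.comp, ← Real.exp_nat_mul, mul_assoc]
      rw [this]; exact hIn
    have hJ := hconv.map_integral_le hcont isClosed_Ici hmem hint1 hcomp
    have heq : ∫ x, ((fun t : ℝ => t ^ n) ∘ fun x => Real.exp (s * x)) x ∂P =
        ∫ x, Real.exp ((n : ℝ) * s * x) ∂P := by
      congr 1; funext x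
      simp [Function.comp, ← Real.exp_nat_mul, mul_assoc]
    calc c ^ n ≤ ∫ x, ((fun t : ℝ => t ^ n) ∘ fun x => Real.exp (s * x)) x ∂P := hJ
      _ = ∫ x, Real.exp ((n : ℝ) * s * x) ∂P := heq
      _ ≤ M := hMn
  obtain ⟨n, hnM⟩ := pow_unbounded_of_one_lt M hc
  have hn0 : 0 < n := by
    rcases Nat.eq_zero_or_pos n with h0 | h0
    · subst h0
      simp only [pow_zero] at hnM
      have := key 1 one_pos
      simp only [pow_one] at this
      linarith
    · exact h0
  exact absurd (key n hn0) (not_le.2 hnM)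
end

section
/- Let q : ℝ → ℝ be a continuously differentiable function with compact support. Then for every y ∈ ℝ, the function Φ(y) = y · ∫ exp(y·s) q(s) ds is differentiable and its derivative satisfies Φ'(y) = ∫ exp(y·s) · (−s · q'(s)) ds. In other words, the Laplace transform of the function p(s) = −s·q'(s) equals ∂(y·φ(y))/∂y, where φ(y) = ∫ exp(y·s) q(s) ds. -/
/-!
Integrating by parts against `s ↦ exp (y s)`, the compact support of `q` kills the boundary
terms and gives `y φ(y) = -∫ exp (y s) q'(s) ds`. The right-hand side is again a Laplace
transform, now of the continuous compactly supported `q'`, and differentiating it under the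
integral sign brings down the factor `s`.
-/

open MeasureTheory

-- The two-sided Laplace transform; it is `0` wherever the integrand is not integrable.
noncomputable def laplace (g : ℝ → ℝ) (y : ℝ) : ℝ :=
  ∫ s, Real.exp (y * s) * g s

lemma norm_mul_exp_mul_le {s t R T : ℝ} (hs : |s| ≤ R) (ht : |t| ≤ T) :
    ‖s * Real.exp (t * s)‖ ≤ R * Real.exp (T * R) := by
  have hR : 0 ≤ R := (abs_nonneg s).trans hs
  have hts : t * s ≤ T * R :=
    calc t * s ≤ |t| * |s| := by rw [← abs_mul]; exact le_abs_self _
      _ ≤ T * R := mul_le_mul ht hs (abs_nonneg s) ((abs_nonneg t).trans ht)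
  rw [norm_mul, Real.norm_eq_abs, Real.norm_of_nonneg (Real.exp_pos _).le]
  exact mul_le_mul hs (Real.exp_le_exp.mpr hts) (Real.exp_pos _).le hR

theorem hasDerivAt_laplace {g : ℝ → ℝ} (hg : Continuous g) (hsupp : HasCompactSupport g)
    (y : ℝ) : HasDerivAt (laplace g) (laplace (fun s => s * g s) y) y := by
  obtain ⟨R, hR⟩ := hsupp.isCompact.isBounded.subset_closedBall 0
  have hbound : ∀ s, ∀ t ∈ Metric.ball y 1,
      ‖s * Real.exp (t * s) * g s‖ ≤ R * Real.exp ((|y| + 1) * R) * |g s| := by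
    intro s t ht
    by_cases hs : g s = 0
    · simp [hs]
    have hsR : |s| ≤ R := by simpa using hR (subset_tsupport g hs)
    have htT : |t| ≤ |y| + 1 := by
      have := abs_sub_abs_le_abs_sub t y
      rw [Metric.mem_ball, Real.dist_eq] at ht
      linarith
    rw [norm_mul, Real.norm_eq_abs (g s)]
    exact mul_le_mul_of_nonneg_right (norm_mul_exp_mul_le hsR htT) (abs_nonneg _)
  have hint : ∀ {h : ℝ → ℝ}, Continuous h → Integrable fun s => h s * g s := fun hh =>
    (hh.mul hg).integrable_of_hasCompactSupport hsupp.mul_left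
  refine (hasDerivAt_integral_of_dominated_loc_of_deriv_le (Metric.ball_mem_nhds y one_pos)
    (.of_forall fun t => (hint (by fun_prop)).aestronglyMeasurable) (hint (by fun_prop))
    (hint (by fun_prop)).aestronglyMeasurable (.of_forall hbound)
    ((hg.abs.integrable_of_hasCompactSupport hsupp.abs).const_mul _)
    (.of_forall fun s t _ => ?_)).2.congr_deriv ?_
  · exact ((hasDerivAt_mul_const s).exp.mul_const (g s)).congr_deriv (by ring)
  · simp only [laplace]
    congr 1 with s
    ring

theorem integral_mul_deriv_eq_neg_of_hasCompactSupport {u q : ℝ → ℝ} (hu : ContDiff ℝ 1 u)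
    (hq : ContDiff ℝ 1 q) (hsupp : HasCompactSupport q) :
    ∫ s, u s * deriv q s = -∫ s, deriv u s * q s :=
  integral_mul_deriv_eq_deriv_mul_of_integrable
    (fun s _ => (hu.differentiable one_ne_zero s).hasDerivAt)
    (fun s _ => (hq.differentiable one_ne_zero s).hasDerivAt)
    ((hu.continuous.mul (hq.continuous_deriv le_rfl)).integrable_of_hasCompactSupport
      hsupp.deriv.mul_left)
    (((hu.continuous_deriv le_rfl).mul hq.continuous).integrable_of_hasCompactSupport
      hsupp.mul_left)
    ((hu.continuous.mul hq.continuous).integrable_of_hasCompactSupport hsupp.mul_left)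

theorem laplace_deriv {q : ℝ → ℝ} (hq : ContDiff ℝ 1 q) (hsupp : HasCompactSupport q)
    (y : ℝ) : laplace (deriv q) y = -(y * laplace q y) := by
  have hexp : deriv (fun s => Real.exp (y * s)) = fun s => y * Real.exp (y * s) := by
    ext s
    exact ((hasDerivAt_id s).const_mul y).exp.deriv.trans (by simp [mul_comm])
  rw [laplace, integral_mul_deriv_eq_neg_of_hasCompactSupport (by fun_prop) hq hsupp, hexp]
  simp only [mul_assoc, integral_const_mul, laplace]

/-- For `q` continuously differentiable with compact support, the Laplace transform of
`s ↦ −s q'(s)` equals the derivative of `y ↦ y · φ(y)` where `φ(y) = ∫ exp(y s) q(s) ds`. -/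
theorem laplace_of_neg_mul_deriv (q : ℝ → ℝ) (hq : ContDiff ℝ 1 q)
    (hsupp : HasCompactSupport q) :
    ∀ y : ℝ,
      HasDerivAt (fun t => t * ∫ s, Real.exp (t * s) * q s)
        (∫ s, Real.exp (y * s) * (-s * deriv q s)) y := by
  intro y
  have hΦ : (fun t => t * laplace q t) = -laplace (deriv q) := by
    ext t
    rw [Pi.neg_apply, laplace_deriv hq hsupp, neg_neg]
  have hderiv : HasDerivAt (fun t => t * laplace q t)
      (-laplace (fun s => s * deriv q s) y) y :=
    hΦ ▸ (hasDerivAt_laplace (hq.continuous_deriv le_rfl) hsupp.deriv y).neg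
  refine hderiv.congr_deriv ?_
  simp only [laplace, ← integral_neg, neg_mul, mul_neg]
end

section
/- Let x, y, α, β, γ ∈ ℝ and n ∈ ℕ. For the Hénon-type exponent E(a, b) = x·(b + γ·a − α·a²) + y·β·a, the mixed iterated partial derivative of order n in a and order n in b of (a, b) ↦ exp(E(a, b)), evaluated at (a, b) = (0, 0), equals x^n times the n-th iterated derivative at 0 of the one-variable function a ↦ exp((x·γ + y·β)·a − x·α·a²). That is, (d^n/db^n)|_{b=0} (d^n/da^n)|_{a=0} exp(x·(b + γ·a − α·a²) + y·β·a) = x^n · (d^n/da^n)|_{a=0} exp((x·γ + y·β)·a − x·α·a²). -/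
/-! The exponent splits as `x·b + ((xγ + yβ)·a − xα·a²)`, so the integrand is a product of a
function of `b` alone and a function of `a` alone. The mixed derivative of such a product is the
product of the one-variable derivatives, and the `b`-factor `exp (x·b)` contributes `xⁿ` at `0`. -/

theorem iteratedDeriv_iteratedDeriv_mul_of_separated {𝕜 : Type*} [NontriviallyNormedField 𝕜]
    (u g : 𝕜 → 𝕜) (m n : ℕ) (s t : 𝕜) :
    iteratedDeriv m (fun b => iteratedDeriv n (fun a => u b * g a) s) t =
      iteratedDeriv m u t * iteratedDeriv n g s := by
  simp only [iteratedDeriv_const_mul_field]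
  exact iteratedDeriv_mul_const_field u _

theorem henon_exp_eq_mul (x y α β γ a b : ℝ) :
    Real.exp (x * (b + γ * a - α * a ^ 2) + y * β * a) =
      Real.exp (x * b) * Real.exp ((x * γ + y * β) * a - x * α * a ^ 2) := by
  rw [← Real.exp_add]
  ring_nf

/-- Factorization of the Hénon mixed derivative: the mixed `n`-th iterated partial
derivatives in `a` and `b` of `exp(x(b + γa − αa²) + yβa)` at `(0,0)` equal
`xⁿ` times the `n`-th derivative at `0` of `a ↦ exp((xγ + yβ)a − xαa²)`. -/
theorem henon_mixed_deriv_factorization (x y α β γ : ℝ) (n : ℕ) :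
    iteratedDeriv n
        (fun b => iteratedDeriv n
          (fun a => Real.exp (x * (b + γ * a - α * a ^ 2) + y * β * a)) 0) 0 =
      x ^ n *
        iteratedDeriv n (fun a => Real.exp ((x * γ + y * β) * a - x * α * a ^ 2)) 0 := by
  simp only [henon_exp_eq_mul x y α β γ]
  rw [iteratedDeriv_iteratedDeriv_mul_of_separated, iteratedDeriv_exp_const_mul]
  simp
end
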